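/- Let A ∈ 𝒫_π be a canonical plane matrix of type π with parameters λ_{j,i}, and for i ∈ {1,...,m_1} let V_i = ℂ[A]·e_i be the A-cyclic subspace of ℂ^n generated by the standard basis vector e_i. Then for every j ∈ {1,...,t} and every i ∈ P_j = {m_1 − m_j + 1, ..., m_1 − m_{j+1}}, the restriction of A to the A-invariant subspace V_i is similar to the s_j × s_j matrix G_j; equivalently, V_i has a basis consisting of standard basis vectors with respect to which the restriction of A is represented by G_j. -/

import Mathlib

/- Common setup: canonical plane matrices (P. Daugulis, "A parametrization of
matrix conjugacy orbit sets as unions of affine planes"). -/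

open Matrix Polynomial

noncomputable section

/-- `ℕ`-indexed entries of the generalized companion matrix `R_l(y₁,...,y_l)`:
subdiagonal entries `1`, last column given (via Vieta) by the coefficients of
`∏ (X - yᵢ)` (entry in row `k` of the last column is
`(−1)^{l+1−k}·e_{l+1−k}(y)`), all other entries `0`. -/
def genCompE (l : ℕ) (y : Fin l → ℂ) (i j : ℕ) : ℂ :=
  if i < l ∧ j < l then
    (if i = j + 1 then 1
     else if j = l - 1 then -((∏ k, (X - C (y k))).coeff i)
     else 0)
  else 0

/-- The generalized companion matrix `R_l(y₁,...,y_l)`, i.e. the companion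
matrix of `∏ (X - yᵢ)`. -/
def genComp (l : ℕ) (y : Fin l → ℂ) : Matrix (Fin l) (Fin l) ℂ :=
  Matrix.of fun i j => genCompE l y i j

/-- A partition of `n`, recorded by its stacks: `t` stacks, with strictly
decreasing positive distinct values `m 0 > m 1 > ... > m (t-1)` and positive
lengths `l j`, so that the partition consists of `l j` copies of `m j` and
`n = ∑ j, l j * m j`. -/
structure StackPartition (n : ℕ) where
  t : ℕ
  m : Fin t → ℕ
  l : Fin t → ℕ
  m_pos : ∀ j, 0 < m j
  l_pos : ∀ j, 0 < l j
  m_strictAnti : ∀ i j : Fin t, i < j → m j < m i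
  sum_eq : (∑ j, l j * m j) = n

namespace StackPartition

variable {n : ℕ} (P : StackPartition n)

/-- `m j` extended by `0` beyond the number of stacks (`0`-indexed), so
`mE 0 = m_1` and `mE t = m_{t+1} = 0` in the paper's notation. -/
def mE (j : ℕ) : ℕ := if h : j < P.t then P.m ⟨j, h⟩ else 0

/-- Row/column offset of the `j`-th diagonal block (`0`-indexed):
`S j = ∑_{i<j} l i * m i`. -/
def S (j : ℕ) : ℕ := ∑ i : Fin P.t, if (i : ℕ) < j then P.l i * P.m i else 0

/-- `sE j = ∑_{i<j} l i`; the paper's `s_j` (for `1`-indexed `j`) is `sE j`. -/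
def sE (j : ℕ) : ℕ := ∑ i : Fin P.t, if (i : ℕ) < j then P.l i else 0

/-- The multiset of addends of the partition. -/
def parts : Multiset ℕ := ∑ j : Fin P.t, Multiset.replicate (P.l j) (P.m j)

/-- Offsets for the direct sum `⊕_j (m_j - m_{j+1}) G_j`. -/
def T (k : ℕ) : ℕ :=
  ∑ i : Fin P.t, if (i : ℕ) < k then (P.m i - P.mE ((i : ℕ) + 1)) * P.sE ((i : ℕ) + 1) else 0

end StackPartition

/-- Parameters `λ_{j,1},...,λ_{j,l_j}` for each stack `j`. -/
def Params {n : ℕ} (P : StackPartition n) := (j : Fin P.t) → Fin (P.l j) → ℂ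

/-- `ℕ`-indexed entry of the canonical plane matrix of type `P` with
parameters `lam`: the `j`-th diagonal block (of size `l j * m j`, occupying
rows and columns `[S j, S (j+1))`) is `R_{l j}(lam j) ⊗ E_{m j}` (row index
`a` of the block encodes the pair `(a / m j, a % m j)`), the block directly
below it occupies the first `m (j+1)` rows of block `j+1` and the last `m j`
columns of block `j` and equals `[O | E_{m (j+1)}]`, and all other entries
vanish. -/
def cpmEntry {n : ℕ} (P : StackPartition n) (lam : Params P) (r c : ℕ) : ℂ :=
  (∑ j : Fin P.t,
    if P.S j ≤ r ∧ r < P.S ((j : ℕ) + 1) ∧ P.S j ≤ c ∧ c < P.S ((j : ℕ) + 1)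
        ∧ (r - P.S j) % P.m j = (c - P.S j) % P.m j then
      genCompE (P.l j) (lam j) ((r - P.S j) / P.m j) ((c - P.S j) / P.m j)
    else 0)
  +
  (∑ j : Fin P.t,
    if P.S ((j : ℕ) + 1) ≤ r ∧ r < P.S ((j : ℕ) + 1) + P.mE ((j : ℕ) + 1)
        ∧ P.S ((j : ℕ) + 1) - P.m j ≤ c ∧ c < P.S ((j : ℕ) + 1)
        ∧ c - (P.S ((j : ℕ) + 1) - P.m j)
            = (P.m j - P.mE ((j : ℕ) + 1)) + (r - P.S ((j : ℕ) + 1)) then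
      (1 : ℂ)
    else 0)

/-- The canonical plane matrix of type `P` with parameters `lam`. -/
def cpm {n : ℕ} (P : StackPartition n) (lam : Params P) : Matrix (Fin n) (Fin n) ℂ :=
  Matrix.of fun r c => cpmEntry P lam r c

/-- The set `𝒫_π` of canonical plane matrices of type `P`. -/
def planeSet {n : ℕ} (P : StackPartition n) : Set (Matrix (Fin n) (Fin n) ℂ) :=
  { A | ∃ lam : Params P, A = cpm P lam }

/-- Similarity (conjugacy) of square complex matrices. -/
def MatrixSimilar {n : ℕ} (A B : Matrix (Fin n) (Fin n) ℂ) : Prop :=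
  ∃ Q : Matrix (Fin n) (Fin n) ℂ, IsUnit Q.det ∧ A * Q = Q * B

/-- The `A`-cyclic subspace `ℂ[A]·v`, spanned by `v, Av, A²v, ...`. -/
def cyclicSpan {n : ℕ} (A : Matrix (Fin n) (Fin n) ℂ) (v : Fin n → ℂ) :
    Submodule ℂ (Fin n → ℂ) :=
  Submodule.span ℂ (Set.range fun k : ℕ => (A ^ k) *ᵥ v)

/-- `ℕ`-indexed entry of the matrix
`G_j = ⊕_{i≤j} C(a_{i,0},...,a_{i,l_i−1}) + Σ_{i<j} E_{s_i+1,s_i}`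
(`0`-indexed `j`; the `i`-th diagonal block is the companion matrix of
`∏_k (X - λ_{i,k})`, and the matrix units sit just below the lower-left
corners of the diagonal blocks). -/
def GEntry {n : ℕ} (P : StackPartition n) (lam : Params P) (j r c : ℕ) : ℂ :=
  (∑ i : Fin P.t,
    if (i : ℕ) ≤ j ∧ P.sE i ≤ r ∧ r < P.sE ((i : ℕ) + 1)
        ∧ P.sE i ≤ c ∧ c < P.sE ((i : ℕ) + 1) then
      genCompE (P.l i) (lam i) (r - P.sE i) (c - P.sE i)
    else 0)
  +
  (∑ i : Fin P.t,
    if 1 ≤ (i : ℕ) ∧ (i : ℕ) ≤ j ∧ r = P.sE i ∧ c + 1 = P.sE i then (1 : ℂ) else 0)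

/-- The `s_j × s_j` matrix `G_j` (`0`-indexed `j`, of size `sE (j+1)`). -/
def Gm {n : ℕ} (P : StackPartition n) (lam : Params P) (j : Fin P.t) :
    Matrix (Fin (P.sE ((j : ℕ) + 1))) (Fin (P.sE ((j : ℕ) + 1))) ℂ :=
  Matrix.of fun r c => GEntry P lam j r c

/-- The multiset `[λ_{j,1},...,λ_{j,l_j}]` of stack `j`. -/
def stackMultiset {n : ℕ} (P : StackPartition n) (lam : Params P) (j : Fin P.t) :
    Multiset ℂ :=
  Multiset.map (lam j) Finset.univ.val

/-- `μ(z, j)`: multiplicity of `z` in the multiset `[λ_{j,1},...,λ_{j,l_j}]`. -/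
def mu {n : ℕ} (P : StackPartition n) (lam : Params P) (z : ℂ) (j : Fin P.t) : ℕ :=
  (stackMultiset P lam j).count z

/-- The multiset of all parameters of stacks `0,...,j` (`0`-indexed), so
`α(z, j) = (lamUpTo P lam j).count z`. -/
def lamUpTo {n : ℕ} (P : StackPartition n) (lam : Params P) (j : ℕ) : Multiset ℂ :=
  ∑ i : Fin P.t, if (i : ℕ) ≤ j then stackMultiset P lam i else 0

/-- Index type for the direct sum of one Jordan block per distinct element of a
multiset `s`, the block for `z` having size `s.count z`. -/
abbrev JordanIdx (s : Multiset ℂ) : Type := Σ z : s.toFinset, Fin (s.count z.val)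

/-- The direct sum `⊕_z J_{s.count z}(z)` over the distinct elements `z` of the
multiset `s` (lower Jordan blocks: eigenvalue on the diagonal, ones on the
subdiagonal). -/
def jordanOfMultiset (s : Multiset ℂ) : Matrix (JordanIdx s) (JordanIdx s) ℂ :=
  Matrix.of fun x y =>
    if x.1 = y.1 then
      (if (x.2 : ℕ) = (y.2 : ℕ) then x.1.val
       else if (x.2 : ℕ) = (y.2 : ℕ) + 1 then 1 else 0)
    else 0

/-- `0`-indexed Weyr characteristic: `weyr B z i = ω_{i+1}` where
`ω_k = dim ker (B - zI)^k − dim ker (B - zI)^{k-1}`. -/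
def weyr {n : ℕ} (B : Matrix (Fin n) (Fin n) ℂ) (z : ℂ) (i : ℕ) : ℕ :=
  Module.finrank ℂ (LinearMap.ker ((B - z • 1).mulVecLin ^ (i + 1)))
    - Module.finrank ℂ (LinearMap.ker ((B - z • 1).mulVecLin ^ i))

/-- `ℕ`-indexed entry of the block diagonal matrix `⊕_j (m_j - m_{j+1}) G_j`
(for each `j`, exactly `m j - m (j+1)` consecutive copies of `G_j`). -/
def dsEntry {n : ℕ} (P : StackPartition n) (lam : Params P) (r c : ℕ) : ℂ :=
  ∑ j : Fin P.t,
    if P.T j ≤ r ∧ r < P.T ((j : ℕ) + 1) ∧ P.T j ≤ c ∧ c < P.T ((j : ℕ) + 1)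
        ∧ (r - P.T j) / P.sE ((j : ℕ) + 1) = (c - P.T j) / P.sE ((j : ℕ) + 1) then
      GEntry P lam j ((r - P.T j) % P.sE ((j : ℕ) + 1)) ((c - P.T j) % P.sE ((j : ℕ) + 1))
    else 0

/-- Index type for `⊕_{j=1}^{t} (m_j - m_{j+1}) (⊕_z J_{α(z,j)}(z))`. -/
abbrev FullJordanIdx {n : ℕ} (P : StackPartition n) (lam : Params P) : Type :=
  Σ j : Fin P.t, Fin (P.m j - P.mE ((j : ℕ) + 1)) × JordanIdx (lamUpTo P lam (j : ℕ))

/-- The matrix `⊕_{j=1}^{t} (m_j - m_{j+1}) (⊕_z J_{α(z,j)}(z))`: for each `j`,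
`m j - m (j+1)` copies of the direct sum, over the distinct `z` with
`α(z,j) = μ(z,1) + ... + μ(z,j) > 0`, of the Jordan blocks `J_{α(z,j)}(z)`. -/
def fullJordan {n : ℕ} (P : StackPartition n) (lam : Params P) :
    Matrix (FullJordanIdx P lam) (FullJordanIdx P lam) ℂ :=
  Matrix.of fun x y =>
    if h : x.1 = y.1 then
      (fun y2 : Fin (P.m x.1 - P.mE ((x.1 : ℕ) + 1)) × JordanIdx (lamUpTo P lam (x.1 : ℕ)) =>
        if x.2.1 = y2.1 then jordanOfMultiset (lamUpTo P lam (x.1 : ℕ)) x.2.2 y2.2 else 0)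
      (cast (congrArg (fun j : Fin P.t =>
        Fin (P.m j - P.mE ((j : ℕ) + 1)) × JordanIdx (lamUpTo P lam (j : ℕ))) h.symm) y.2)
    else 0

end

/-
Inside stack `b`, the block `R_{l_b} ⊗ E_{m_b}` acts on the `l_b` rows of a fixed residue
modulo `m_b` exactly as the companion matrix `R_{l_b}`, and the link block `[O | E]` sends the
last of these rows to the first row of stack `b + 1`, lowering the residue by `m_b - m_{b+1}`.
Starting from row `i ∈ P_j`, the residue `i - (m₁ - m_b)` stays in range precisely for the stacks
`b ≤ j`, so the `s_j` rows visited this way carry standard basis vectors `v_0 = e_i, …` on which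
`A` acts through the columns of `G_j`. As `G_j` is upper Hessenberg with unit subdiagonal, each
`v_{k+1}` is `A v_k` minus a combination of `v_0, …, v_k`; hence the `v_k` span `ℂ[A]·e_i`.
-/

theorem Nat.mul_add_lt_mul_iff {a c m ρ : ℕ} (hρ : ρ < m) : a * m + ρ < c * m ↔ a < c := by
  constructor
  · intro h
    by_contra hc
    nlinarith [Nat.mul_le_mul_right m (not_lt.1 hc)]
  · intro h
    nlinarith [Nat.mul_le_mul_right m (Nat.succ_le_of_lt h)]

theorem Nat.mul_add_div_of_lt {a m ρ : ℕ} (hρ : ρ < m) : (a * m + ρ) / m = a :=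
  Nat.div_eq_of_lt_le le_self_add (by rw [Nat.succ_mul]; omega)

theorem Nat.exists_le_lt_succ_of_lt {s : ℕ → ℕ} {r : ℕ} (h0 : s 0 ≤ r) :
    ∀ {t : ℕ}, r < s t → ∃ b < t, s b ≤ r ∧ r < s (b + 1)
  | 0, h => absurd h0 (not_le.2 h)
  | t + 1, h => by
    by_cases ht : r < s t
    · obtain ⟨b, hb, hbr⟩ := Nat.exists_le_lt_succ_of_lt h0 ht
      exact ⟨b, by omega, hbr⟩
    · exact ⟨t, by omega, not_lt.1 ht, h⟩

theorem Monotone.eq_of_le_lt_succ {s : ℕ → ℕ} (hs : Monotone s) {b b' r : ℕ}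
    (hb : s b ≤ r) (hb' : r < s (b + 1)) (hc : s b' ≤ r) (hc' : r < s (b' + 1)) : b = b' := by
  by_contra hne
  rcases Nat.lt_or_gt_of_ne hne with h | h
  · have := hs (show b + 1 ≤ b' by omega); omega
  · have := hs (show b' + 1 ≤ b by omega); omega

theorem Fin.sum_ite_val_lt_succ {M : Type*} [AddCommMonoid M] {t : ℕ} (f : Fin t → M)
    (b : Fin t) :
    (∑ x : Fin t, if (x : ℕ) < b + 1 then f x else 0)
      = (∑ x : Fin t, if (x : ℕ) < b then f x else 0) + f b := by
  have h : ∀ x : Fin t, (if (x : ℕ) < b + 1 then f x else 0)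
      = (if (x : ℕ) < b then f x else 0) + if b = x then f x else 0 := by
    intro x
    rcases lt_trichotomy (x : ℕ) b with h | h | h
    · simp [h, Nat.lt_succ_of_lt h, Fin.ne_of_gt h]
    · simp [Fin.ext h]
    · simp [Fin.ne_of_lt h, h.not_gt, show ¬ (x : ℕ) < b + 1 by omega]
  rw [Finset.sum_congr rfl fun x _ => h x, Finset.sum_add_distrib, Finset.sum_ite_eq,
    if_pos (Finset.mem_univ b)]

section CyclicBasis

open Submodule

variable {R M : Type*} [Ring R] [AddCommGroup M] [Module R M] {N : ℕ}
  {φ : Module.End R M} {v : Fin N → M} {G : Matrix (Fin N) (Fin N) R}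

theorem mapsTo_span_range_of_apply_eq_sum (hφ : ∀ k, φ (v k) = ∑ k', G k' k • v k') :
    ∀ x ∈ span R (Set.range v), φ x ∈ span R (Set.range v) := by
  suffices span R (Set.range v) ≤ (span R (Set.range v)).comap φ from fun x hx => this hx
  refine span_le.2 ?_
  rintro _ ⟨k, rfl⟩
  rw [SetLike.mem_coe, mem_comap, hφ]
  exact sum_mem fun k' _ => smul_mem _ _ (subset_span ⟨k', rfl⟩)

theorem mapsTo_span_range_pow_apply (x : M) :
    ∀ y ∈ span R (Set.range fun p : ℕ => (φ ^ p) x),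
      φ y ∈ span R (Set.range fun p : ℕ => (φ ^ p) x) := by
  suffices span R (Set.range fun p : ℕ => (φ ^ p) x)
      ≤ (span R (Set.range fun p : ℕ => (φ ^ p) x)).comap φ from fun y hy => this hy
  refine span_le.2 ?_
  rintro _ ⟨p, rfl⟩
  exact subset_span ⟨p + 1, by dsimp only; rw [pow_succ', Module.End.mul_apply]⟩

theorem span_range_pow_apply_eq_span_range (h0 : 0 < N)
    (hφ : ∀ k, φ (v k) = ∑ k', G k' k • v k')
    (hsub : ∀ k k' : Fin N, (k' : ℕ) = k + 1 → G k' k = 1)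
    (hhess : ∀ k k' : Fin N, (k : ℕ) + 1 < k' → G k' k = 0) :
    span R (Set.range fun p : ℕ => (φ ^ p) (v ⟨0, h0⟩)) = span R (Set.range v) := by
  classical
  set W := span R (Set.range fun p : ℕ => (φ ^ p) (v ⟨0, h0⟩))
  refine le_antisymm (span_le.2 ?_) (span_le.2 ?_)
  · rintro _ ⟨p, rfl⟩
    induction p with
    | zero => exact subset_span ⟨_, rfl⟩
    | succ p ih =>
      dsimp only at ih ⊢
      rw [pow_succ', Module.End.mul_apply]
      exact mapsTo_span_range_of_apply_eq_sum hφ _ ih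
  · suffices ∀ m, ∀ k : Fin N, (k : ℕ) ≤ m → v k ∈ W by
      rintro _ ⟨k, rfl⟩
      exact this k k le_rfl
    intro m
    induction m with
    | zero =>
      intro k hk
      obtain rfl : k = ⟨0, h0⟩ := Fin.ext (Nat.le_zero.1 hk)
      exact subset_span ⟨0, by dsimp only; rw [pow_zero, Module.End.one_apply]⟩
    | succ m ih =>
      intro k hk
      rcases Nat.lt_or_eq_of_le hk with hk | hk
      · exact ih k (Nat.le_of_lt_succ hk)
      set kp : Fin N := ⟨m, by omega⟩
      have hφkp : φ (v kp) ∈ W := mapsTo_span_range_pow_apply _ _ (ih kp le_rfl)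
      -- `φ (v kp)` is `v k` plus a combination of the `v k'` with `k' ≤ m`
      have hrest : ∑ k' ∈ Finset.univ.erase k, G k' kp • v k' ∈ W := by
        refine sum_mem fun k' hk' => ?_
        rcases lt_trichotomy (k' : ℕ) k with hlt | heq | hgt
        · exact smul_mem _ _ (ih k' (by omega))
        · exact absurd (Fin.ext heq) (Finset.ne_of_mem_erase hk')
        · rw [hhess kp k' (by simp [kp]; omega), zero_smul]
          exact zero_mem _
      rw [hφ, ← Finset.add_sum_erase _ _ (Finset.mem_univ k), hsub kp k hk, one_smul] at hφkp
      exact (W.add_mem_iff_left hrest).1 hφkp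

end CyclicBasis

theorem LinearMap.toMatrix_restrict_eq_of_apply_eq_sum {R M : Type*} [CommRing R]
    [AddCommGroup M] [Module R M] {N : ℕ} {φ : Module.End R M} {v : Fin N → M}
    {G : Matrix (Fin N) (Fin N) R} {W : Submodule R M} (b : Module.Basis (Fin N) R W)
    (hb : ∀ k, (b k : M) = v k) (hφ : ∀ k, φ (v k) = ∑ k', G k' k • v k')
    (hW : ∀ x ∈ W, φ x ∈ W) :
    LinearMap.toMatrix b b (φ.restrict hW) = G := by
  ext k' k
  have hcol : φ.restrict hW (b k) = ∑ k', G k' k • b k' := by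
    apply Subtype.ext
    simp only [LinearMap.coe_restrict_apply, hb, hφ, Submodule.coe_sum, Submodule.coe_smul]
  rw [LinearMap.toMatrix_apply, hcol, b.repr_sum_self]

theorem Matrix.mulVec_single_one_eq_sum_of_submatrix {ι κ R : Type*} [Fintype ι]
    [DecidableEq ι] [Fintype κ] [Semiring R] {A : Matrix ι ι R} {f : κ → ι}
    (hf : Function.Injective f) {G : Matrix κ κ R} (hAG : ∀ k k', A (f k') (f k) = G k' k)
    (hA : ∀ k r, r ∉ Set.range f → A r (f k) = 0) (k : κ) :
    A *ᵥ Pi.single (f k) 1 = ∑ k', G k' k • Pi.single (f k') 1 := by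
  ext r
  rw [Matrix.mulVec_single_one, Finset.sum_apply]
  by_cases hr : r ∈ Set.range f
  · obtain ⟨k', rfl⟩ := hr
    rw [Finset.sum_eq_single k' (fun k'' _ hne => by simp [hf.ne hne]) (by simp)]
    simp [hAG]
  · simp only [Matrix.col_apply, hA k r hr, Pi.smul_apply, smul_eq_mul]
    refine (Finset.sum_eq_zero fun k' _ => ?_).symm
    rw [Pi.single_eq_of_ne (fun h => hr ⟨k', h.symm⟩), mul_zero]

theorem cyclicSpan_eq_span_range_pow_apply {n : ℕ} (A : Matrix (Fin n) (Fin n) ℂ)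
    (x : Fin n → ℂ) :
    cyclicSpan A x = Submodule.span ℂ (Set.range fun p : ℕ => (A.mulVecLin ^ p) x) := by
  simp only [cyclicSpan, ← Matrix.toLin'_apply', ← Matrix.toLin'_pow, Matrix.toLin'_apply]

namespace StackPartition

variable {n : ℕ} (P : StackPartition n)

theorem S_succ (b : Fin P.t) : P.S (b + 1) = P.S b + P.l b * P.m b :=
  Fin.sum_ite_val_lt_succ _ b

theorem sE_succ (b : Fin P.t) : P.sE (b + 1) = P.sE b + P.l b :=
  Fin.sum_ite_val_lt_succ _ b

theorem S_zero : P.S 0 = 0 := by simp [S]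

theorem sE_zero : P.sE 0 = 0 := by simp [sE]

theorem S_t : P.S P.t = n := by simp [S, P.sum_eq]

theorem S_le (b : ℕ) : P.S b ≤ n :=
  (Finset.sum_le_sum fun _ _ => by split_ifs <;> simp).trans_eq P.sum_eq

theorem S_monotone : Monotone P.S := fun _ _ h =>
  Finset.sum_le_sum fun _ _ => by split_ifs <;> omega

theorem sE_monotone : Monotone P.sE := fun _ _ h =>
  Finset.sum_le_sum fun _ _ => by split_ifs <;> omega

theorem sE_succ_pos (j : Fin P.t) : 0 < P.sE (j + 1) := by
  have := P.sE_succ j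
  have := P.l_pos j
  omega

theorem S_le_S_succ_sub (b : Fin P.t) : P.S b ≤ P.S (b + 1) - P.m b := by
  have := P.S_succ b
  have := Nat.le_mul_of_pos_left (P.m b) (P.l_pos b)
  omega

theorem mE_coe (b : Fin P.t) : P.mE b = P.m b := by simp [mE]

theorem mE_antitone : Antitone P.mE := by
  intro a b hab
  unfold mE
  split_ifs with hb ha ha
  · rcases hab.lt_or_eq with h | rfl
    · exact (P.m_strictAnti ⟨a, ha⟩ ⟨b, hb⟩ h).le
    · rfl
  all_goals omega

theorem eq_of_S_le_of_lt {b b' : Fin P.t} {r : ℕ} (hb : P.S b ≤ r) (hb' : r < P.S (b + 1))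
    (hc : P.S b' ≤ r) (hc' : r < P.S (b' + 1)) : b = b' :=
  Fin.ext (P.S_monotone.eq_of_le_lt_succ hb hb' hc hc')

theorem eq_of_sE_le_of_lt {b b' : Fin P.t} {k : ℕ} (hb : P.sE b ≤ k) (hb' : k < P.sE (b + 1))
    (hc : P.sE b' ≤ k) (hc' : k < P.sE (b' + 1)) : b = b' :=
  Fin.ext (P.sE_monotone.eq_of_le_lt_succ hb hb' hc hc')

theorem exists_S_coord {r : ℕ} (hr : r < n) :
    ∃ (b : Fin P.t) (a ρ : ℕ), a < P.l b ∧ ρ < P.m b ∧ r = P.S b + a * P.m b + ρ := by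
  obtain ⟨b, hb, hbr, hrb⟩ :=
    Nat.exists_le_lt_succ_of_lt (s := P.S) (by rw [S_zero]; exact Nat.zero_le r) (P.S_t ▸ hr)
  have hlt := P.S_succ ⟨b, hb⟩
  have hm := P.m_pos ⟨b, hb⟩
  refine ⟨⟨b, hb⟩, (r - P.S b) / P.m ⟨b, hb⟩, (r - P.S b) % P.m ⟨b, hb⟩,
    Nat.div_lt_of_lt_mul (by simp only at hlt; rw [mul_comm]; omega), Nat.mod_lt _ hm, ?_⟩
  have := Nat.div_add_mod' (r - P.S b) (P.m ⟨b, hb⟩)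
  simp only
  omega

theorem exists_sE_coord {j : Fin P.t} {k : ℕ} (hk : k < P.sE (j + 1)) :
    ∃ (b : Fin P.t) (a : ℕ), b ≤ j ∧ a < P.l b ∧ k = P.sE b + a := by
  obtain ⟨b, hb, hbk, hkb⟩ :=
    Nat.exists_le_lt_succ_of_lt (s := P.sE) (by rw [sE_zero]; exact Nat.zero_le k) hk
  have hbt : b < P.t := by omega
  have := P.sE_succ ⟨b, hbt⟩
  exact ⟨⟨b, hbt⟩, k - P.sE b, Fin.mk_le_mk.2 (by omega), by simp only at this ⊢; omega,
    by simp only; omega⟩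

variable {P} {b : Fin P.t} {a ρ : ℕ}

theorem S_add_lt_S_succ (ha : a < P.l b) (hρ : ρ < P.m b) :
    P.S b + a * P.m b + ρ < P.S (b + 1) := by
  have := (Nat.mul_add_lt_mul_iff hρ).2 ha
  rw [S_succ]
  omega

theorem S_succ_sub_le_iff (ha : a < P.l b) (hρ : ρ < P.m b) :
    P.S (b + 1) - P.m b ≤ P.S b + a * P.m b + ρ ↔ a + 1 = P.l b := by
  have := Nat.mul_add_lt_mul_iff (a := a) (c := P.l b - 1) hρ
  have := Nat.sub_one_mul (P.l b) (P.m b)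
  have := Nat.le_mul_of_pos_left (P.m b) (P.l_pos b)
  have := P.S_succ b
  omega

theorem S_succ_le_and_lt_iff (ha : a < P.l b) (hρ : ρ < P.m b) (b' : Fin P.t) :
    P.S (b' + 1) ≤ P.S b + a * P.m b + ρ ∧ P.S b + a * P.m b + ρ < P.S (b' + 1) + P.mE (b' + 1)
      ↔ (b : ℕ) = b' + 1 ∧ a = 0 := by
  have hlt := S_add_lt_S_succ ha hρ
  constructor
  · rintro ⟨hlo, hhi⟩
    rcases lt_trichotomy (b : ℕ) (b' + 1) with h | h | h
    · have := P.S_monotone (show (b : ℕ) + 1 ≤ b' + 1 by omega)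
      omega
    · have hmE : P.mE (b' + 1) = P.m b := by rw [← h, mE_coe]
      have := Nat.mul_add_lt_mul_iff (a := a) (c := 1) hρ
      have := P.S_monotone h.ge
      have := P.S_monotone h.le
      omega
    · have hbt : (b' : ℕ) + 1 < P.t := by omega
      have := P.S_succ ⟨b' + 1, hbt⟩
      have := P.S_monotone (show (b' : ℕ) + 1 + 1 ≤ b by omega)
      have := Nat.le_mul_of_pos_left (P.m ⟨b' + 1, hbt⟩) (P.l_pos ⟨b' + 1, hbt⟩)
      have := P.mE_coe ⟨b' + 1, hbt⟩
      simp only at *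
      omega
  · rintro ⟨h, rfl⟩
    have hmE : P.mE (b' + 1) = P.m b := by rw [← h, mE_coe]
    have hS : P.S b = P.S (b' + 1) := by rw [h]
    omega

theorem sE_add_lt_sE_succ (ha : a < P.l b) : P.sE b + a < P.sE (b + 1) := by
  rw [sE_succ]
  omega

theorem sE_add_eq_sE_iff (ha : a < P.l b) (x : Fin P.t) :
    P.sE b + a = P.sE x ↔ x = b ∧ a = 0 := by
  constructor
  · intro h
    have hx := sE_add_lt_sE_succ (P.l_pos x)
    have hb := sE_add_lt_sE_succ ha
    obtain rfl := P.eq_of_sE_le_of_lt (b := x) (b' := b) le_rfl (by omega) (by omega) (by omega)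
    omega
  · rintro ⟨rfl, rfl⟩
    rfl

theorem sE_add_add_one_eq_sE_iff (ha : a < P.l b) (b' : Fin P.t) :
    P.sE b + a + 1 = P.sE b' ↔ (b' : ℕ) = b + 1 ∧ a + 1 = P.l b := by
  have hb := P.sE_succ b
  constructor
  · intro h
    rcases lt_trichotomy (b' : ℕ) (b + 1) with hlt | heq | hgt
    · have := P.sE_monotone (show (b' : ℕ) ≤ b by omega)
      omega
    · have : P.sE b' = P.sE (b + 1) := by rw [heq]
      omega
    · have hbt : (b : ℕ) + 1 < P.t := by omega
      have := P.sE_succ ⟨b + 1, hbt⟩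
      have := P.sE_monotone (show (b : ℕ) + 1 + 1 ≤ b' by omega)
      have := P.l_pos ⟨b + 1, hbt⟩
      simp only at *
      omega
  · rintro ⟨h, ha1⟩
    have : P.sE b' = P.sE (b + 1) := by rw [h]
    omega

end StackPartition

theorem genCompE_succ_self {l q : ℕ} (y : Fin l → ℂ) (h : q + 1 < l) :
    genCompE l y (q + 1) q = 1 := by
  rw [genCompE, if_pos ⟨h, by omega⟩, if_pos rfl]

theorem genCompE_eq_zero_of_succ_lt {l p q : ℕ} (y : Fin l → ℂ) (h : q + 1 < p) :
    genCompE l y p q = 0 := by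
  rw [genCompE]
  split_ifs <;> first | rfl | omega

section BlockCoordinates

open StackPartition

variable {n : ℕ} (P : StackPartition n) (lam : Params P)

theorem cpmEntry_blockCoord {b b' : Fin P.t} {a a' ρ ρ' : ℕ} (ha : a < P.l b) (hρ : ρ < P.m b)
    (ha' : a' < P.l b') (hρ' : ρ' < P.m b') :
    cpmEntry P lam (P.S b' + a' * P.m b' + ρ') (P.S b + a * P.m b + ρ) =
      (if b' = b ∧ ρ' = ρ then genCompE (P.l b) (lam b) a' a else 0) +
      (if (b' : ℕ) = b + 1 ∧ a + 1 = P.l b ∧ a' = 0 ∧ ρ = P.m b - P.m b' + ρ' then 1 else 0) := by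
  have hlast := S_succ_sub_le_iff ha hρ
  have hrows := S_succ_le_and_lt_iff ha' hρ' b
  have hc := S_add_lt_S_succ ha hρ
  have hr := S_add_lt_S_succ ha' hρ'
  generalize hr_eq : P.S b' + a' * P.m b' + ρ' = r at hr hrows
  generalize hc_eq : P.S b + a * P.m b + ρ = c at hc hlast
  have hc_mem : ∀ x : Fin P.t, P.S x ≤ c → c < P.S (x + 1) → x = b := fun x h h' =>
    P.eq_of_S_le_of_lt h h' (by omega) hc
  rw [cpmEntry]
  congr 1
  · rw [Finset.sum_eq_single b (fun x _ hx => if_neg fun h => hx (hc_mem x h.2.2.1 h.2.2.2.1))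
      (by simp)]
    by_cases hbb : b' = b
    · subst hbb
      have hcr : c - P.S b' = a * P.m b' + ρ := by omega
      have hrr : r - P.S b' = a' * P.m b' + ρ' := by omega
      simp only [hcr, hrr, Nat.mul_add_mod_of_lt hρ, Nat.mul_add_mod_of_lt hρ',
        Nat.mul_add_div_of_lt hρ, Nat.mul_add_div_of_lt hρ']
      exact if_congr (by simp only [true_and]; omega) rfl rfl
    · refine (if_neg fun h => hbb ?_).trans (if_neg fun h => hbb h.1).symm
      exact (P.eq_of_S_le_of_lt h.1 h.2.1 (by omega) hr).symm
  · rw [Finset.sum_eq_single b (fun x _ hx => if_neg fun h =>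
      hx (hc_mem x ((P.S_le_S_succ_sub x).trans h.2.2.1) h.2.2.2.1)) (by simp)]
    have hfull : a + 1 = P.l b → a * P.m b + P.m b = P.l b * P.m b := fun h => by
      rw [← h, Nat.succ_mul]
    have hSb := P.S_succ b
    refine if_congr ⟨fun h => ?_, fun h => ?_⟩ rfl rfl
    · obtain ⟨hb', rfl⟩ := hrows.1 ⟨h.1, h.2.1⟩
      have hmE : P.mE (b + 1) = P.m b' := by rw [← hb', mE_coe]
      have hS : P.S b' = P.S (b + 1) := by rw [hb']
      omega
    · obtain ⟨hb', ha1, rfl, hρρ'⟩ := h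
      have := hrows.2 ⟨hb', rfl⟩
      have hmE : P.mE (b + 1) = P.m b' := by rw [← hb', mE_coe]
      have hS : P.S b' = P.S (b + 1) := by rw [hb']
      omega

theorem GEntry_blockCoord {j : ℕ} {b b' : Fin P.t} {a a' : ℕ} (hb' : (b' : ℕ) ≤ j)
    (ha : a < P.l b) (ha' : a' < P.l b') :
    GEntry P lam j (P.sE b' + a') (P.sE b + a) =
      (if b' = b then genCompE (P.l b) (lam b) a' a else 0) +
      (if (b' : ℕ) = b + 1 ∧ a + 1 = P.l b ∧ a' = 0 then 1 else 0) := by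
  have hc := sE_add_lt_sE_succ ha
  have hr := sE_add_lt_sE_succ ha'
  rw [GEntry]
  congr 1
  · rw [Finset.sum_eq_single b (fun x _ hx => if_neg fun h =>
      hx (P.eq_of_sE_le_of_lt h.2.2.2.1 h.2.2.2.2 le_self_add hc)) (by simp)]
    by_cases hbb : b' = b
    · subst hbb
      rw [if_pos ⟨hb', le_self_add, hr, le_self_add, hc⟩, if_pos rfl, Nat.add_sub_cancel_left,
        Nat.add_sub_cancel_left]
    · exact (if_neg fun h => hbb (P.eq_of_sE_le_of_lt le_self_add hr h.2.1 h.2.2.1)).trans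
        (if_neg hbb).symm
  · have hterm : ∀ x : Fin P.t,
        (if 1 ≤ (x : ℕ) ∧ (x : ℕ) ≤ j ∧ P.sE b' + a' = P.sE x ∧ P.sE b + a + 1 = P.sE x
          then (1 : ℂ) else 0)
        = if b' = x then (if (b' : ℕ) = b + 1 ∧ a + 1 = P.l b ∧ a' = 0 then 1 else 0) else 0 := by
      intro x
      simp only [sE_add_add_one_eq_sE_iff ha, sE_add_eq_sE_iff ha']
      by_cases hx : b' = x
      · subst hx
        rw [if_pos rfl]
        exact if_congr ⟨fun h => ⟨h.2.2.2.1, h.2.2.2.2, h.2.2.1.2⟩,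
          fun h => ⟨by omega, hb', ⟨rfl, h.2.2⟩, h.1, h.2.1⟩⟩ rfl rfl
      · rw [if_neg fun h => hx h.2.2.1.1.symm, if_neg hx]
    rw [Finset.sum_congr rfl fun x _ => hterm x, Finset.sum_ite_eq, if_pos (Finset.mem_univ _)]

variable (j : Fin P.t)

theorem Gm_apply_of_eq_succ {k k' : Fin (P.sE (j + 1))} (h : (k' : ℕ) = k + 1) :
    Gm P lam j k' k = 1 := by
  obtain ⟨b, a, hbj, ha, hk⟩ := P.exists_sE_coord k.isLt
  rw [Gm, Matrix.of_apply, hk]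
  by_cases hlast : a + 1 = P.l b
  · have hbj' : (b : ℕ) + 1 ≤ j := by
      by_contra hbj'
      have : P.sE (b + 1) = P.sE (j + 1) := by rw [show (b : ℕ) = j by omega]
      have := P.sE_succ b
      omega
    set b₁ : Fin P.t := ⟨b + 1, by omega⟩
    have hk' : (k' : ℕ) = P.sE b₁ + 0 := by
      have := P.sE_succ b
      simp only [b₁]
      omega
    rw [hk', GEntry_blockCoord P lam hbj' ha (P.l_pos b₁), if_neg (by simp [b₁, Fin.ext_iff]),
      if_pos ⟨rfl, hlast, rfl⟩, zero_add]
  · have ha' : a + 1 < P.l b := by omega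
    rw [show (k' : ℕ) = P.sE b + (a + 1) by omega, GEntry_blockCoord P lam (by omega) ha ha',
      if_pos rfl, if_neg (by omega), genCompE_succ_self _ ha', add_zero]

theorem Gm_apply_eq_zero_of_succ_lt {k k' : Fin (P.sE (j + 1))} (h : (k : ℕ) + 1 < k') :
    Gm P lam j k' k = 0 := by
  obtain ⟨b, a, -, ha, hk⟩ := P.exists_sE_coord k.isLt
  obtain ⟨b', a', hb'j, ha', hk'⟩ := P.exists_sE_coord k'.isLt
  rw [Gm, Matrix.of_apply, hk, hk', GEntry_blockCoord P lam hb'j ha ha']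
  have hlink : ¬((b' : ℕ) = b + 1 ∧ a + 1 = P.l b ∧ a' = 0) := by
    rintro ⟨hb', ha1, rfl⟩
    have := (sE_add_add_one_eq_sE_iff ha b').2 ⟨hb', ha1⟩
    omega
  rw [if_neg hlink, add_zero]
  split_ifs with hbb
  · subst hbb
    exact genCompE_eq_zero_of_succ_lt _ (by omega)
  · rfl

end BlockCoordinates

namespace StackPartition

variable {n : ℕ} (P : StackPartition n)

def stackOf (k : ℕ) : ℕ := Nat.findGreatest (fun b => P.sE b ≤ k) P.t

/-- The row carrying the `k`-th vector of the standard basis of `ℂ[A]·e_i`: in stack `b` the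
chain `e_i, A e_i, …` runs through the rows of residue `i - (mE 0 - m b)` modulo `m b`. -/
def cyclicRow (i k : ℕ) : ℕ :=
  P.S (P.stackOf k) + (k - P.sE (P.stackOf k)) * P.mE (P.stackOf k)
    + (i + P.mE (P.stackOf k) - P.mE 0)

variable {P} {b : Fin P.t} {a i : ℕ}

theorem stackOf_sE_add (ha : a < P.l b) : P.stackOf (P.sE b + a) = b := by
  refine Nat.findGreatest_eq_iff.2 ⟨b.isLt.le, fun _ => le_self_add, fun x hbx hxt hx => ?_⟩
  have := P.sE_monotone (show (b : ℕ) + 1 ≤ x by omega)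
  have := sE_add_lt_sE_succ ha
  omega

theorem cyclicRow_sE_add (i : ℕ) (ha : a < P.l b) :
    P.cyclicRow i (P.sE b + a) = P.S b + a * P.m b + (i + P.m b - P.mE 0) := by
  rw [cyclicRow, stackOf_sE_add ha, mE_coe, Nat.add_sub_cancel_left]

theorem add_m_sub_mE_zero_lt (hi : i < P.mE 0) (b : Fin P.t) : i + P.m b - P.mE 0 < P.m b := by
  have := P.m_pos b
  omega

theorem mE_zero_le_add {j : Fin P.t} (h1 : P.mE 0 - P.m j ≤ i) (hb : b ≤ j) :
    P.mE 0 ≤ i + P.m b := by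
  have := P.mE_antitone (show (b : ℕ) ≤ j from hb)
  rw [mE_coe, mE_coe] at this
  omega

theorem cyclicRow_zero (h0 : 0 < P.t) : P.cyclicRow i 0 = i := by
  have := cyclicRow_sE_add (b := ⟨0, h0⟩) i (P.l_pos _)
  simp only [sE_zero, S_zero, zero_mul, add_zero, ← mE_coe] at this
  omega

theorem cyclicRow_lt {j : Fin P.t} (hi : i < P.mE 0) {k : ℕ} (hk : k < P.sE (j + 1)) :
    P.cyclicRow i k < n := by
  obtain ⟨b, a, -, ha, rfl⟩ := P.exists_sE_coord hk
  rw [cyclicRow_sE_add i ha]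
  exact (S_add_lt_S_succ ha (add_m_sub_mE_zero_lt hi b)).trans_le (P.S_le _)

theorem eq_of_cyclicRow_eq {j : Fin P.t} (hi : i < P.mE 0) {k k' : ℕ} (hk : k < P.sE (j + 1))
    (hk' : k' < P.sE (j + 1)) (h : P.cyclicRow i k = P.cyclicRow i k') : k = k' := by
  obtain ⟨b, a, -, ha, rfl⟩ := P.exists_sE_coord hk
  obtain ⟨b', a', -, ha', rfl⟩ := P.exists_sE_coord hk'
  rw [cyclicRow_sE_add i ha, cyclicRow_sE_add i ha'] at h
  have hc := S_add_lt_S_succ ha (add_m_sub_mE_zero_lt hi b)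
  have hc' := S_add_lt_S_succ ha' (add_m_sub_mE_zero_lt hi b')
  obtain rfl := P.eq_of_S_le_of_lt (by omega) hc (by omega) (h ▸ hc')
  have : a * P.m b = a' * P.m b := by omega
  rw [Nat.eq_of_mul_eq_mul_right (P.m_pos b) this]

end StackPartition

section CyclicRows

open StackPartition

variable {n : ℕ} {P : StackPartition n} (lam : Params P) {j : Fin P.t} {i : ℕ}

theorem cpmEntry_cyclicRow (h1 : P.mE 0 - P.m j ≤ i) (hi : i < P.mE 0) {b b' : Fin P.t}
    {a a' : ℕ} (hb' : b' ≤ j) (ha : a < P.l b) (ha' : a' < P.l b') :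
    cpmEntry P lam (P.cyclicRow i (P.sE b' + a')) (P.cyclicRow i (P.sE b + a)) =
      GEntry P lam j (P.sE b' + a') (P.sE b + a) := by
  rw [cyclicRow_sE_add i ha, cyclicRow_sE_add i ha',
    cpmEntry_blockCoord P lam ha (add_m_sub_mE_zero_lt hi b) ha' (add_m_sub_mE_zero_lt hi b'),
    GEntry_blockCoord P lam hb' ha ha']
  have := mE_zero_le_add h1 hb'
  congr 1
  · exact if_congr ⟨fun h => h.1, fun h => ⟨h, by rw [h]⟩⟩ rfl rfl
  · refine if_congr ⟨fun h => ⟨h.1, h.2.1, h.2.2.1⟩, fun h => ⟨h.1, h.2.1, h.2.2, ?_⟩⟩ rfl rfl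
    have := P.m_strictAnti b b' (by rw [Fin.lt_def]; omega)
    omega

theorem cpmEntry_cyclicRow_eq_zero (h1 : P.mE 0 - P.m j ≤ i)
    (h2 : i < P.mE 0 - P.mE (j + 1)) {b : Fin P.t} {a : ℕ} (hb : b ≤ j) (ha : a < P.l b)
    {r : ℕ} (hr : r < n)
    (hne : ∀ b' : Fin P.t, b' ≤ j → ∀ a' < P.l b', r ≠ P.cyclicRow i (P.sE b' + a')) :
    cpmEntry P lam r (P.cyclicRow i (P.sE b + a)) = 0 := by
  have hi : i < P.mE 0 := by omega
  obtain ⟨b', a', ρ', ha', hρ', rfl⟩ := P.exists_S_coord hr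
  rw [cyclicRow_sE_add i ha, cpmEntry_blockCoord P lam ha (add_m_sub_mE_zero_lt hi b) ha' hρ']
  have hdiag : ¬(b' = b ∧ ρ' = i + P.m b - P.mE 0) := by
    rintro ⟨rfl, rfl⟩
    exact hne b' hb a' ha' (cyclicRow_sE_add i ha').symm
  have hlink : ¬((b' : ℕ) = b + 1 ∧ a + 1 = P.l b ∧ a' = 0
      ∧ i + P.m b - P.mE 0 = P.m b - P.m b' + ρ') := by
    rintro ⟨hb', -, rfl, hρ⟩
    by_cases hb'j : b' ≤ j
    · refine hne b' hb'j 0 (P.l_pos b') ?_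
      have := mE_zero_le_add h1 hb'j
      have := P.m_strictAnti b b' (by rw [Fin.lt_def]; omega)
      rw [cyclicRow_sE_add i (P.l_pos b')]
      omega
    · -- the residue would have to leave stack `j`, which `h2` forbids
      have hj : P.mE (j + 1) = P.m b' := by
        rw [show (j : ℕ) + 1 = b' by rw [Fin.le_def] at hb hb'j; omega, mE_coe]
      obtain rfl : b = j := Fin.ext (by rw [Fin.le_def] at hb hb'j; omega)
      omega
  rw [if_neg hdiag, if_neg hlink, add_zero]

theorem exists_cyclicRows (h1 : P.mE 0 - P.m j ≤ i) (h2 : i < P.mE 0 - P.mE (j + 1)) :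
    ∃ f : Fin (P.sE (j + 1)) → Fin n, Function.Injective f ∧
      (f ⟨0, P.sE_succ_pos j⟩ : ℕ) = i ∧
      ∀ k, cpm P lam *ᵥ Pi.single (f k) 1 = ∑ k', Gm P lam j k' k • Pi.single (f k') 1 := by
  have hi : i < P.mE 0 := by omega
  let f : Fin (P.sE (j + 1)) → Fin n := fun k => ⟨P.cyclicRow i k, cyclicRow_lt hi k.isLt⟩
  have hf : Function.Injective f := fun k k' h =>
    Fin.ext (eq_of_cyclicRow_eq hi k.isLt k'.isLt (congrArg Fin.val h))
  refine ⟨f, hf, cyclicRow_zero j.pos, Matrix.mulVec_single_one_eq_sum_of_submatrix hf ?_ ?_⟩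
  · intro k k'
    obtain ⟨b, a, -, ha, hk⟩ := P.exists_sE_coord k.isLt
    obtain ⟨b', a', hb', ha', hk'⟩ := P.exists_sE_coord k'.isLt
    change cpmEntry P lam (P.cyclicRow i k') (P.cyclicRow i k) = GEntry P lam j k' k
    rw [hk, hk']
    exact cpmEntry_cyclicRow lam h1 hi hb' ha ha'
  · intro k r hr
    obtain ⟨b, a, hb, ha, hk⟩ := P.exists_sE_coord k.isLt
    change cpmEntry P lam r (P.cyclicRow i k) = 0
    rw [hk]
    refine cpmEntry_cyclicRow_eq_zero lam h1 h2 hb ha r.isLt fun b' hb' a' ha' hr' => hr ?_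
    have hlt : P.sE b' + a' < P.sE (j + 1) :=
      (sE_add_lt_sE_succ ha').trans_le (P.sE_monotone (Nat.succ_le_succ hb'))
    exact ⟨⟨_, hlt⟩, Fin.ext hr'.symm⟩

end CyclicRows

theorem statement4_general (n : ℕ) (P : StackPartition n) (lam : Params P)
    (j : Fin P.t) (i : Fin n)
    (h1 : P.mE 0 - P.m j ≤ (i : ℕ)) (h2 : (i : ℕ) < P.mE 0 - P.mE ((j : ℕ) + 1)) :
    ∃ (hinv : ∀ x ∈ cyclicSpan (cpm P lam) (Pi.single i 1),
        (cpm P lam).mulVecLin x ∈ cyclicSpan (cpm P lam) (Pi.single i 1))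
      (b : Module.Basis (Fin (P.sE ((j : ℕ) + 1))) ℂ (cyclicSpan (cpm P lam) (Pi.single i 1))),
      (∀ k, ∃ i' : Fin n, (b k : Fin n → ℂ) = Pi.single i' 1) ∧
      LinearMap.toMatrix b b ((cpm P lam).mulVecLin.restrict hinv) = Gm P lam j := by
  obtain ⟨f, hf, hf0, hcol⟩ := exists_cyclicRows lam h1 h2
  set v : Fin (P.sE (j + 1)) → Fin n → ℂ := fun k => Pi.single (f k) 1
  have hv : ∀ k, (cpm P lam).mulVecLin (v k) = ∑ k', Gm P lam j k' k • v k' := hcol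
  have hspan : cyclicSpan (cpm P lam) (Pi.single i 1) = Submodule.span ℂ (Set.range v) := by
    rw [cyclicSpan_eq_span_range_pow_apply, ← Fin.ext hf0,
      span_range_pow_apply_eq_span_range (P.sE_succ_pos j) hv (fun _ _ => Gm_apply_of_eq_succ P lam j)
        (fun _ _ => Gm_apply_eq_zero_of_succ_lt P lam j)]
  have hli : LinearIndependent ℂ v := (Pi.linearIndependent_single_one (Fin n) ℂ).comp f hf
  have hinv : ∀ x ∈ cyclicSpan (cpm P lam) (Pi.single i 1),
      (cpm P lam).mulVecLin x ∈ cyclicSpan (cpm P lam) (Pi.single i 1) := by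
    rw [hspan]
    exact mapsTo_span_range_of_apply_eq_sum hv
  let b := (Module.Basis.span hli).map (LinearEquiv.ofEq _ _ hspan.symm)
  have hb : ∀ k, (b k : Fin n → ℂ) = v k := fun k => by simp [b]
  exact ⟨hinv, b, fun k => ⟨f k, hb k⟩,
    LinearMap.toMatrix_restrict_eq_of_apply_eq_sum b hb hv hinv⟩

/-- For a canonical plane matrix `A ∈ 𝒫_π` and `i ∈ P_j`
(`0`-indexed: `m₁ − m_j ≤ i < m₁ − m_{j+1}`), the subspace `V_i = ℂ[A]·e_i` is
`A`-invariant and has a basis consisting of standard basis vectors with respect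
to which the restriction of `A` is represented by the `s_j × s_j` matrix
`G_j`. -/
theorem statement4 (n : ℕ) (hn : 2 ≤ n) (P : StackPartition n) (lam : Params P)
    (j : Fin P.t) (i : Fin n)
    (h1 : P.mE 0 - P.m j ≤ (i : ℕ)) (h2 : (i : ℕ) < P.mE 0 - P.mE ((j : ℕ) + 1)) :
    ∃ (hinv : ∀ x ∈ cyclicSpan (cpm P lam) (Pi.single i 1),
        (cpm P lam).mulVecLin x ∈ cyclicSpan (cpm P lam) (Pi.single i 1))
      (b : Module.Basis (Fin (P.sE ((j : ℕ) + 1))) ℂ (cyclicSpan (cpm P lam) (Pi.single i 1))),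
      (∀ k, ∃ i' : Fin n, (b k : Fin n → ℂ) = Pi.single i' 1) ∧
      LinearMap.toMatrix b b ((cpm P lam).mulVecLin.restrict hinv) = Gm P lam j :=
  statement4_general n P lam j i h1 h2
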